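/- arXiv:1609.09682 — 3 statements merged into one kernel-verified Lean document; each statement's English description precedes it below -/
import Mathlib

section
/- For the Case-2 soft-cache objective g_SCH2(N) = Σ_i p_i [ (1 - e^{-λTN_i}) + c · e^{-λTN_i} (1 - e^{-λT Σ_{j∈R_i} N_j}) ] with 0 < c < 1, the Hessian H satisfies z^T H z ≤ 0 for all z ∈ ℝ^K, i.e., g_SCH2 is concave on ℝ_{≥0}^K. -/
open Finset

lemma exp_linear_convexOn {K : ℕ} (l : (Fin K → ℝ) →ₗ[ℝ] ℝ) :
    ConvexOn ℝ Set.univ (fun x => Real.exp (l x)) := by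
  refine ⟨convex_univ, ?_⟩
  intro x _ y _ a b ha hb hab
  simp only [map_add, map_smul, smul_eq_mul]
  exact convexOn_exp.2 (Set.mem_univ _) (Set.mem_univ _) ha hb hab

lemma concaveOn_finset_sum {ι E : Type*} [AddCommMonoid E] [Module ℝ E]
    (t : Finset ι) {s : Set E} (hs : Convex ℝ s) (f : ι → E → ℝ)
    (h : ∀ i ∈ t, ConcaveOn ℝ s (f i)) :
    ConcaveOn ℝ s (fun x => ∑ i ∈ t, f i x) := by
  induction t using Finset.cons_induction with
  | empty => simpa using concaveOn_const 0 hs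
  | cons i t hit ih =>
    simp only [Finset.sum_cons]
    exact (h i (Finset.mem_cons_self i t)).add
      (ih fun j hj => h j (Finset.mem_cons_of_mem hj))

/-- The Case-2 soft-cache objective
`g_SCH2(N) = Σ_i p_i [(1 - e^{-λTN_i}) + c e^{-λTN_i}(1 - e^{-λT Σ_{j∈R_i} N_j})]`
with `0 < c < 1` is concave on the nonnegative orthant (equivalently, its Hessian is
negative semi-definite there). -/
theorem gSCH2_concave (K : ℕ) (p : Fin K → ℝ) (hp : ∀ i, 0 ≤ p i)
    (lam T c : ℝ) (hlam : 0 < lam) (hT : 0 < T) (hc0 : 0 < c) (hc1 : c < 1)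
    (R : Fin K → Finset (Fin K)) (hR : ∀ i, i ∉ R i) :
    ConcaveOn ℝ {N : Fin K → ℝ | ∀ i, 0 ≤ N i}
      (fun N => ∑ i, p i *
        ((1 - Real.exp (-lam * T * N i)) +
          c * Real.exp (-lam * T * N i) * (1 - Real.exp (-lam * T * ∑ j ∈ R i, N j)))) := by
  have hset : Convex ℝ {N : Fin K → ℝ | ∀ i, 0 ≤ N i} := by
    intro x hx y hy a b ha hb hab i
    exact add_nonneg (mul_nonneg ha (hx i)) (mul_nonneg hb (hy i))
  -- linear maps
  set l1 : Fin K → ((Fin K → ℝ) →ₗ[ℝ] ℝ) :=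
    fun i => (-(lam * T)) • LinearMap.proj i with hl1
  set l2 : Fin K → ((Fin K → ℝ) →ₗ[ℝ] ℝ) :=
    fun i => (-(lam * T)) • (LinearMap.proj i + ∑ j ∈ R i, LinearMap.proj j) with hl2
  have heval1 : ∀ i (N : Fin K → ℝ), l1 i N = -lam * T * N i := by
    intro i N; simp [hl1]
  have heval2 : ∀ i (N : Fin K → ℝ),
      l2 i N = -lam * T * N i + -lam * T * ∑ j ∈ R i, N j := by
    intro i N
    simp [hl2, LinearMap.sum_apply, Finset.mul_sum]
  have heq : (fun N : Fin K → ℝ => ∑ i, p i *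
        ((1 - Real.exp (-lam * T * N i)) +
          c * Real.exp (-lam * T * N i) * (1 - Real.exp (-lam * T * ∑ j ∈ R i, N j))))
      = fun N => ∑ i, (p i - (p i * (1 - c)) * Real.exp (l1 i N)
          - (p i * c) * Real.exp (l2 i N)) := by
    funext N
    refine Finset.sum_congr rfl fun i _ => ?_
    rw [heval1, heval2, Real.exp_add]
    ring
  rw [heq]
  refine concaveOn_finset_sum _ hset _ fun i _ => ?_
  have h1 : ConvexOn ℝ {N : Fin K → ℝ | ∀ i, 0 ≤ N i}
      (fun N => (p i * (1 - c)) * Real.exp (l1 i N)) := by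
    exact ((exp_linear_convexOn (l1 i)).smul
      (mul_nonneg (hp i) (by linarith))).subset (Set.subset_univ _) hset
  have h2 : ConvexOn ℝ {N : Fin K → ℝ | ∀ i, 0 ≤ N i}
      (fun N => (p i * c) * Real.exp (l2 i N)) := by
    exact ((exp_linear_convexOn (l2 i)).smul
      (mul_nonneg (hp i) hc0.le)).subset (Set.subset_univ _) hset
  exact ((concaveOn_const (p i) hset).sub h1).sub h2
end

section
/- Let U ∈ {0,1}^{K×K} with u_{ii}=1 and each row of U having exactly L ones. Under the baseline optimal placement N_j* = (1/(λT)) ln(p_j λT/ρ), the soft-cache miss ratio equals 1 - g_SCH1(N*) = (ρ/(λT))^L · Σ_{i=1}^K p_i · Π_{j : u_{ij}=1} (1/p_j). -/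
open Finset

/-- With a 0/1 relation matrix `U` (`u_{ii}=1`, each row with exactly `L` ones), under the
baseline optimal placement `N_j* = (1/(λT)) ln (p_j λ T / ρ)`, the soft-cache miss ratio is
`Σ_i p_i e^{-λT Σ_j N_j* u_{ij}} = (ρ/(λT))^L Σ_i p_i Π_{j : u_{ij}=1} (1/p_j)`. -/
theorem sch1_miss_rate (K L : ℕ) (p : Fin K → ℝ) (hp : ∀ i, 0 < p i)
    (hsum : ∑ i, p i = 1) (lam T ρ : ℝ) (hlam : 0 < lam) (hT : 0 < T) (hρ : 0 < ρ)
    (hint : ∀ j, 1 ≤ p j * lam * T / ρ)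
    (u : Fin K → Fin K → ℝ) (hu : ∀ i j, u i j = 0 ∨ u i j = 1)
    (hdiag : ∀ i, u i i = 1)
    (hrow : ∀ i, ({j | u i j = 1} : Finset (Fin K)).card = L)
    (Nstar : Fin K → ℝ)
    (hN : ∀ j, Nstar j = (1 / (lam * T)) * Real.log (p j * lam * T / ρ)) :
    ∑ i, p i * Real.exp (-lam * T * ∑ j, Nstar j * u i j) =
      (ρ / (lam * T)) ^ L * ∑ i, p i * ∏ j ∈ ({j | u i j = 1} : Finset (Fin K)), (1 / p j) := by
  have hlT : (0:ℝ) < lam * T := mul_pos hlam hT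
  rw [Finset.mul_sum]
  refine Finset.sum_congr rfl fun i _ => ?_
  set S : Finset (Fin K) := ({j | u i j = 1} : Finset (Fin K)) with hS
  have h1 : ∑ j, Nstar j * u i j = ∑ j ∈ S, Nstar j := by
    rw [hS, Finset.sum_filter]
    refine Finset.sum_congr rfl fun j _ => ?_
    rcases hu i j with h | h <;> simp [h]
  have h2 : Real.exp (-lam * T * ∑ j, Nstar j * u i j)
      = ∏ j ∈ S, Real.exp (-(lam * T) * Nstar j) := by
    rw [h1, ← Real.exp_sum, ← Finset.mul_sum]
    ring_nf
  have h3 : ∀ j ∈ S, Real.exp (-(lam * T) * Nstar j) = (ρ / (lam * T)) * (1 / p j) := by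
    intro j _
    have hpos : 0 < p j * lam * T / ρ :=
      div_pos (mul_pos (mul_pos (hp j) hlam) hT) hρ
    rw [hN j]
    have : -(lam * T) * ((1 / (lam * T)) * Real.log (p j * lam * T / ρ))
        = -Real.log (p j * lam * T / ρ) := by
      field_simp
    rw [this, Real.exp_neg, Real.exp_log hpos]
    field_simp
  rw [h2, Finset.prod_congr rfl h3, Finset.prod_mul_distrib, Finset.prod_const, hrow i]
  ring
end

section
/- Under uniform popularity p_i = 1/K for all i, with exactly L related contents per item (u_{ii}=1, row sums L), the soft-cache-hit gain ratio (1-g_Base(N*))/(1-g_SCH1(N*)) equals (Kρ/(λT))^{-(L-1)}. -/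
open Finset

/-- Under uniform popularity `p_i = 1/K` and exactly `L` related contents per item, the
soft-cache-hit gain ratio equals `(Kρ/(λT))^{-(L-1)}`. -/
theorem uniform_gain_ratio (K L : ℕ) (hK : 0 < K) (hL : 1 ≤ L)
    (lam T ρ : ℝ) (hlam : 0 < lam) (hT : 0 < T) (hρ : 0 < ρ)
    (hint : 1 ≤ (1 / K) * lam * T / ρ)
    (u : Fin K → Fin K → ℝ) (hu : ∀ i j, u i j = 0 ∨ u i j = 1)
    (hdiag : ∀ i, u i i = 1)
    (hrow : ∀ i, ({j | u i j = 1} : Finset (Fin K)).card = L)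
    (Nstar : Fin K → ℝ)
    (hN : ∀ j, Nstar j = (1 / (lam * T)) * Real.log ((1 / K) * lam * T / ρ)) :
    (∑ i, (1 / (K : ℝ)) * Real.exp (-lam * T * Nstar i)) /
      (∑ i, (1 / (K : ℝ)) * Real.exp (-lam * T * ∑ j, Nstar j * u i j)) =
    ((K : ℝ) * ρ / (lam * T)) ^ (-((L : ℤ) - 1)) := by
  have hK0 : (0:ℝ) < K := by exact_mod_cast hK
  set A : ℝ := (1 / K) * lam * T / ρ with hAdef
  have hA0 : 0 < A := by positivity
  have hA : A ≠ 0 := ne_of_gt hA0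
  have hlt : lam * T ≠ 0 := by positivity
  -- row sums
  have hrowsum : ∀ i, (∑ j, u i j) = L := by
    intro i
    have h1 : (∑ j, u i j) = ∑ j, (if u i j = 1 then (1:ℝ) else 0) := by
      apply Finset.sum_congr rfl
      intro j _
      rcases hu i j with h | h <;> simp [h]
    rw [h1, Finset.sum_boole]
    exact_mod_cast hrow i
  -- exponent computations
  have hexp1 : ∀ i : Fin K, Real.exp (-lam * T * Nstar i) = A ^ (-1 : ℤ) := by
    intro i
    rw [hN i]
    have : -lam * T * (1 / (lam * T) * Real.log A) = -Real.log A := by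
      field_simp; try ring
    rw [this]
    rw [Real.exp_neg, Real.exp_log hA0, zpow_neg, zpow_one]
  have hexp2 : ∀ i : Fin K,
      Real.exp (-lam * T * ∑ j, Nstar j * u i j) = A ^ (-(L:ℤ)) := by
    intro i
    have hs : (∑ j, Nstar j * u i j) = 1 / (lam * T) * Real.log A * L := by
      have : (∑ j, Nstar j * u i j)
          = 1 / (lam * T) * Real.log A * ∑ j, u i j := by
        rw [Finset.mul_sum]
        exact Finset.sum_congr rfl fun j _ => by rw [hN j]
      rw [this, hrowsum i]
    rw [hs]
    have h2 : -lam * T * (1 / (lam * T) * Real.log A * L)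
        = (L:ℝ) * (-Real.log A) := by field_simp; try ring
    rw [h2, Real.exp_nat_mul, Real.exp_neg, Real.exp_log hA0]
    rw [inv_pow, ← zpow_natCast, ← zpow_neg]
  have hnum : (∑ i, (1 / (K : ℝ)) * Real.exp (-lam * T * Nstar i))
      = A ^ (-1 : ℤ) := by
    simp only [hexp1, Finset.sum_const, Finset.card_univ, Fintype.card_fin, nsmul_eq_mul]
    field_simp
  have hden : (∑ i, (1 / (K : ℝ)) * Real.exp (-lam * T * ∑ j, Nstar j * u i j))
      = A ^ (-(L:ℤ)) := by
    simp only [hexp2, Finset.sum_const, Finset.card_univ, Fintype.card_fin, nsmul_eq_mul]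
    field_simp
  rw [hnum, hden]
  have hKρ : (K : ℝ) * ρ / (lam * T) = A⁻¹ := by
    rw [hAdef]
    field_simp
  rw [hKρ, inv_zpow, ← zpow_neg, ← zpow_sub₀ hA]
  ring_nf
end
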